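/- arXiv:2003.01415 — 2 statements merged into one kernel-verified Lean document; each statement's English description precedes it below -/
import Mathlib

section
/- For every probability measure μ on X and all continuous functions g, g' : X → ℝ, the soft C-transform is a uniform contraction for the variation norm: ‖T_μ g − T_μ g'‖_var ≤ κ · ‖g − g'‖_var, where κ = 1 − exp(−L · diam(X)) < 1. In particular the contraction factor κ does not depend on μ. -/
/-!
Put `u = g - g'` and `w z = g' - C (z, ·)`. For fixed `x, x'` the quantity
`(T g - T g') x - (T g - T g') x'` is `φ 1 - φ 0`, where
`φ t = log ∫ exp (t u + w x') - log ∫ exp (t u + w x)`. By the mean value theorem it equals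
`φ' t`, the difference of the means of `u` under the two weights `exp (t u + w x')` and
`exp (t u + w x)`. Lipschitz continuity of `C` makes these weights pointwise comparable up to
the factor `c = exp (-L · diam X)`, and two weights comparable in this sense give means of `u`
differing by at most `(1 - c) · (sup u - inf u)`.
-/

open MeasureTheory Filter

/-- Soft C-transform: `(T_μ h)(x) = − log ∫ exp(h(y) − C(x, y)) dμ(y)`. -/
noncomputable def softT {X : Type*} [MeasurableSpace X]
    (C : X × X → ℝ) (μ : Measure X) (h : X → ℝ) : X → ℝ :=
  fun x => - Real.log (∫ y, Real.exp (h y - C (x, y)) ∂μ)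

/-- Variation norm: `‖f‖_var = sup f − inf f`. -/
noncomputable def varNorm {X : Type*} (f : X → ℝ) : ℝ :=
  (⨆ x, f x) - ⨅ x, f x

-- `Eᵢ / Zᵢ` is the mean of `v` under a weight `Kᵢ`; the hypotheses are what `a ≤ v ≤ b`,
-- `c K₁ ≤ K₂` and `c K₂ ≤ K₁` give after integration.
theorem div_sub_div_le_of_comparable {Z₁ Z₂ E₁ E₂ a b c : ℝ} (hZ₁ : 0 < Z₁) (hZ₂ : 0 < Z₂)
    (hc : 0 ≤ c) (hcZ₁ : c * Z₁ ≤ Z₂) (hcZ₂ : c * Z₂ ≤ Z₁)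
    (haE₁ : a * Z₁ ≤ E₁) (hbE₁ : E₁ ≤ b * Z₁) (haE₂ : a * Z₂ ≤ E₂) (hbE₂ : E₂ ≤ b * Z₂)
    (h₁ : E₁ - c * E₂ ≤ b * (Z₁ - c * Z₂)) (h₂ : a * (Z₂ - c * Z₁) ≤ E₂ - c * E₁) :
    E₁ / Z₁ - E₂ / Z₂ ≤ (1 - c) * (b - a) := by
  rw [div_sub_div _ _ hZ₁.ne' hZ₂.ne', div_le_iff₀ (mul_pos hZ₁ hZ₂)]
  rcases le_total Z₁ Z₂ with hZ | hZ
  · nlinarith [mul_le_mul_of_nonneg_right h₁ hZ₂.le,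
      mul_nonneg (sub_nonneg.2 hcZ₂) (sub_nonneg.2 haE₂),
      mul_nonneg (mul_nonneg hc (sub_nonneg.2 hZ)) (sub_nonneg.2 (haE₂.trans hbE₂))]
  · nlinarith [mul_le_mul_of_nonneg_right h₂ hZ₁.le,
      mul_nonneg (sub_nonneg.2 hcZ₁) (sub_nonneg.2 hbE₁),
      mul_nonneg (mul_nonneg hc (sub_nonneg.2 hZ)) (sub_nonneg.2 (haE₁.trans hbE₁))]

theorem integral_mul_div_integral_sub_le {α : Type*} [MeasurableSpace α] {μ : Measure α}
    {v K₁ K₂ : α → ℝ} {a b c : ℝ} (hc : 0 ≤ c) (hva : ∀ y, a ≤ v y) (hvb : ∀ y, v y ≤ b)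
    (hK₁ : ∀ y, 0 ≤ K₁ y) (hK₂ : ∀ y, 0 ≤ K₂ y)
    (hK₁₂ : ∀ y, c * K₁ y ≤ K₂ y) (hK₂₁ : ∀ y, c * K₂ y ≤ K₁ y)
    (hiK₁ : Integrable K₁ μ) (hiK₂ : Integrable K₂ μ)
    (hivK₁ : Integrable (fun y => v y * K₁ y) μ) (hivK₂ : Integrable (fun y => v y * K₂ y) μ)
    (hZ₁ : 0 < ∫ y, K₁ y ∂μ) (hZ₂ : 0 < ∫ y, K₂ y ∂μ) :
    (∫ y, v y * K₁ y ∂μ) / (∫ y, K₁ y ∂μ) - (∫ y, v y * K₂ y ∂μ) / (∫ y, K₂ y ∂μ)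
      ≤ (1 - c) * (b - a) := by
  have mean_ge {K : α → ℝ} (hK : ∀ y, 0 ≤ K y) (hiK : Integrable K μ)
      (hivK : Integrable (fun y => v y * K y) μ) :
      a * ∫ y, K y ∂μ ≤ ∫ y, v y * K y ∂μ := by
    rw [← integral_const_mul]
    exact integral_mono (hiK.const_mul a) hivK fun y => mul_le_mul_of_nonneg_right (hva y) (hK y)
  have mean_le {K : α → ℝ} (hK : ∀ y, 0 ≤ K y) (hiK : Integrable K μ)
      (hivK : Integrable (fun y => v y * K y) μ) :
      ∫ y, v y * K y ∂μ ≤ b * ∫ y, K y ∂μ := by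
    rw [← integral_const_mul]
    exact integral_mono hivK (hiK.const_mul b) fun y => mul_le_mul_of_nonneg_right (hvb y) (hK y)
  have excess_le : ∫ y, v y * K₁ y ∂μ - c * ∫ y, v y * K₂ y ∂μ
      ≤ b * (∫ y, K₁ y ∂μ - c * ∫ y, K₂ y ∂μ) := by
    have := integral_mono (f := fun y => v y * K₁ y - c * (v y * K₂ y))
      (g := fun y => b * (K₁ y - c * K₂ y)) (hivK₁.sub (hivK₂.const_mul c))
      ((hiK₁.sub (hiK₂.const_mul c)).const_mul b) fun y => by
        nlinarith [mul_le_mul_of_nonneg_right (hvb y) (sub_nonneg.2 (hK₂₁ y))]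
    simpa only [integral_sub hivK₁ (hivK₂.const_mul c), integral_sub hiK₁ (hiK₂.const_mul c),
      integral_const_mul] using this
  have excess_ge : a * (∫ y, K₂ y ∂μ - c * ∫ y, K₁ y ∂μ)
      ≤ ∫ y, v y * K₂ y ∂μ - c * ∫ y, v y * K₁ y ∂μ := by
    have := integral_mono (f := fun y => a * (K₂ y - c * K₁ y))
      (g := fun y => v y * K₂ y - c * (v y * K₁ y)) ((hiK₂.sub (hiK₁.const_mul c)).const_mul a)
      (hivK₂.sub (hivK₁.const_mul c)) fun y => by
        nlinarith [mul_le_mul_of_nonneg_right (hva y) (sub_nonneg.2 (hK₁₂ y))]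
    simpa only [integral_sub hivK₂ (hivK₁.const_mul c), integral_sub hiK₂ (hiK₁.const_mul c),
      integral_const_mul] using this
  have hZ_le {K K' : α → ℝ} (hiK : Integrable K μ) (hiK' : Integrable K' μ)
      (h : ∀ y, c * K y ≤ K' y) : c * ∫ y, K y ∂μ ≤ ∫ y, K' y ∂μ := by
    rw [← integral_const_mul]; exact integral_mono (hiK.const_mul c) hiK' h
  exact div_sub_div_le_of_comparable hZ₁ hZ₂ hc (hZ_le hiK₁ hiK₂ hK₁₂) (hZ_le hiK₂ hiK₁ hK₂₁)
    (mean_ge hK₁ hiK₁ hivK₁) (mean_le hK₁ hiK₁ hivK₁) (mean_ge hK₂ hiK₂ hivK₂)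
    (mean_le hK₂ hiK₂ hivK₂) excess_le excess_ge

theorem Continuous.integrable_of_compactSpace {X : Type*} [TopologicalSpace X] [CompactSpace X]
    [MeasurableSpace X] [OpensMeasurableSpace X] {μ : Measure X} [IsFiniteMeasure μ]
    {f : X → ℝ} (hf : Continuous f) : Integrable f μ :=
  hf.integrable_of_hasCompactSupport (HasCompactSupport.of_compactSpace f)

theorem hasDerivAt_integral_exp_mul_add {X : Type*} [TopologicalSpace X] [CompactSpace X]
    [MeasurableSpace X] [OpensMeasurableSpace X] (μ : Measure X) [IsFiniteMeasure μ]
    {u w : X → ℝ} (hu : Continuous u) (hw : Continuous w) (t₀ : ℝ) :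
    HasDerivAt (fun t => ∫ y, Real.exp (t * u y + w y) ∂μ)
      (∫ y, u y * Real.exp (t₀ * u y + w y) ∂μ) t₀ := by
  have hF' : Continuous fun p : ℝ × X => u p.2 * Real.exp (p.1 * u p.2 + w p.2) := by fun_prop
  obtain ⟨M, hM⟩ := (isCompact_closedBall t₀ 1 |>.prod isCompact_univ).exists_bound_of_continuousOn
    hF'.continuousOn
  refine (hasDerivAt_integral_of_dominated_loc_of_deriv_le (bound := fun _ => M)
    (Metric.ball_mem_nhds t₀ one_pos) (.of_forall fun t => ?_)
    (Continuous.integrable_of_compactSpace (by fun_prop)) ?_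
    (.of_forall fun y t ht => hM (t, y) ⟨Metric.ball_subset_closedBall ht, trivial⟩)
    (integrable_const M) (.of_forall fun y t _ => ?_)).2
  · exact (by fun_prop : Continuous fun y => Real.exp (t * u y + w y)).aestronglyMeasurable
  · exact (by fun_prop : Continuous fun y => u y * Real.exp (t₀ * u y + w y)).aestronglyMeasurable
  · simpa [mul_comm] using (((hasDerivAt_id t).mul_const (u y)).add_const (w y)).exp

theorem log_integral_exp_add_sub_le {X : Type*} [TopologicalSpace X] [CompactSpace X]
    [MeasurableSpace X] [OpensMeasurableSpace X] (μ : Measure X) [IsProbabilityMeasure μ]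
    {u w₁ w₂ : X → ℝ} (hu : Continuous u) (hw₁ : Continuous w₁) (hw₂ : Continuous w₂)
    {a b D : ℝ} (hua : ∀ y, a ≤ u y) (hub : ∀ y, u y ≤ b) (hw : ∀ y, |w₁ y - w₂ y| ≤ D) :
    (Real.log (∫ y, Real.exp (u y + w₁ y) ∂μ) - Real.log (∫ y, Real.exp (u y + w₂ y) ∂μ)) -
        (Real.log (∫ y, Real.exp (w₁ y) ∂μ) - Real.log (∫ y, Real.exp (w₂ y) ∂μ)) ≤
      (1 - Real.exp (-D)) * (b - a) := by
  set Z : (X → ℝ) → ℝ → ℝ := fun w t => ∫ y, Real.exp (t * u y + w y) ∂μ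
  set E : (X → ℝ) → ℝ → ℝ := fun w t => ∫ y, u y * Real.exp (t * u y + w y) ∂μ
  have hZ_pos {w : X → ℝ} (hwc : Continuous w) (t : ℝ) : 0 < Z w t :=
    integral_exp_pos (Continuous.integrable_of_compactSpace (by fun_prop))
  set φ : ℝ → ℝ := fun t => Real.log (Z w₁ t) - Real.log (Z w₂ t)
  have hφ (t : ℝ) : HasDerivAt φ (E w₁ t / Z w₁ t - E w₂ t / Z w₂ t) t :=
    ((hasDerivAt_integral_exp_mul_add μ hu hw₁ t).log (hZ_pos hw₁ t).ne').sub
      ((hasDerivAt_integral_exp_mul_add μ hu hw₂ t).log (hZ_pos hw₂ t).ne')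
  obtain ⟨t, -, hslope⟩ := exists_hasDerivAt_eq_slope φ _ zero_lt_one
    (fun t _ => (hφ t).continuousAt.continuousWithinAt) (fun t _ => hφ t)
  have hcompare {w w' : X → ℝ} (h : ∀ y, w' y - w y ≤ D) (y : X) :
      Real.exp (-D) * Real.exp (t * u y + w' y) ≤ Real.exp (t * u y + w y) := by
    rw [← Real.exp_add, Real.exp_le_exp]; linarith [h y]
  have hderiv : E w₁ t / Z w₁ t - E w₂ t / Z w₂ t ≤ (1 - Real.exp (-D)) * (b - a) :=
    integral_mul_div_integral_sub_le (μ := μ) (Real.exp_pos (-D)).le hua hub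
    (fun y => (Real.exp_pos _).le) (fun y => (Real.exp_pos _).le)
    (hcompare fun y => (abs_le.1 (hw y)).2) (hcompare fun y => by linarith [(abs_le.1 (hw y)).1])
    (Continuous.integrable_of_compactSpace (by fun_prop))
    (Continuous.integrable_of_compactSpace (by fun_prop))
    (Continuous.integrable_of_compactSpace (by fun_prop))
    (Continuous.integrable_of_compactSpace (by fun_prop)) (hZ_pos hw₁ t) (hZ_pos hw₂ t)
  rw [hslope] at hderiv
  simpa [φ, Z] using hderiv

theorem LipschitzWith.abs_sub_le_mul_diam {X : Type*} [PseudoMetricSpace X] [BoundedSpace X]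
    {K : NNReal} {C : X × X → ℝ} (hC : LipschitzWith K C) (x x' y : X) :
    |C (x, y) - C (x', y)| ≤ K * Metric.diam (Set.univ : Set X) := by
  calc |C (x, y) - C (x', y)| = dist (C (x, y)) (C (x', y)) := (Real.dist_eq _ _).symm
    _ ≤ K * dist (x, y) (x', y) := hC.dist_le_mul _ _
    _ = K * dist x x' := by simp [Prod.dist_eq]
    _ ≤ K * Metric.diam (Set.univ : Set X) := by
      gcongr; exact Metric.dist_le_diam_of_mem (Bornology.isBounded_univ.2 ‹_›) trivial trivial

theorem varNorm_le_of_forall_sub_le {X : Type*} [Nonempty X] {f : X → ℝ} {B : ℝ}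
    (h : ∀ x x', f x - f x' ≤ B) : varNorm f ≤ B := by
  rw [varNorm, sub_le_iff_le_add]
  refine ciSup_le fun x => ?_
  have : f x - B ≤ ⨅ x', f x' := le_ciInf fun x' => by linarith [h x x']
  linarith

/-- The soft C-transform is a uniform contraction for the variation norm, with
contraction factor `κ = 1 − exp(−L·diam X) < 1`, independent of `μ`. -/
theorem softT_contraction
    {X : Type*} [MetricSpace X] [CompactSpace X] [Nonempty X]
    [MeasurableSpace X] [BorelSpace X]
    (L : ℝ) (hL : 0 < L) (C : X × X → ℝ) (hC : LipschitzWith L.toNNReal C)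
    (μ : Measure X) [IsProbabilityMeasure μ]
    (g g' : X → ℝ) (hg : Continuous g) (hg' : Continuous g') :
    varNorm (fun x => softT C μ g x - softT C μ g' x) ≤
      (1 - Real.exp (-(L * Metric.diam (Set.univ : Set X)))) *
        varNorm (fun x => g x - g' x) ∧
    (1 - Real.exp (-(L * Metric.diam (Set.univ : Set X)))) < 1 := by
  have hu : Continuous fun y => g y - g' y := hg.sub hg'
  have hw (z : X) : Continuous fun y => g' y - C (z, y) :=
    hg'.sub (hC.continuous.comp (Continuous.prodMk_right z))
  refine ⟨varNorm_le_of_forall_sub_le fun x x' => ?_, by simpa using Real.exp_pos _⟩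
  have key := log_integral_exp_add_sub_le μ hu (hw x') (hw x) (D := L * Metric.diam Set.univ)
    (fun y => ciInf_le (isCompact_range hu).bddBelow y)
    (fun y => le_ciSup (isCompact_range hu).bddAbove y)
    (fun y => by
      rw [sub_sub_sub_cancel_left, ← Real.coe_toNNReal L hL.le]
      exact hC.abs_sub_le_mul_diam x x' y)
  simp only [sub_add_sub_cancel] at key
  refine (le_of_eq ?_).trans key
  simp only [softT]
  ring
end

section
/- Let (δ_t)_{t≥0}, (η_t)_{t≥0}, (w_t)_{t≥0} be sequences of nonnegative reals and let c ∈ (0, 1] and A ≥ 0. Suppose that for all t: η_t ≤ 1, δ_{t+1} ≤ (1 − c η_t) δ_t + A η_t w_t, and suppose Σ_t η_t = ∞ and Σ_t η_t w_t < ∞. Then δ_t → 0 as t → ∞. -/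
open Filter

/-- Deterministic recursion lemma: if `δ_{t+1} ≤ (1 − c η_t) δ_t + A η_t w_t` with
`c ∈ (0,1]`, `A ≥ 0`, nonnegative sequences, `η_t ≤ 1`, `Σ η_t = ∞` and
`Σ η_t w_t < ∞`, then `δ_t → 0`. -/
theorem recursion_tendsto_zero
    (δ η w : ℕ → ℝ) (c A : ℝ)
    (hδ0 : ∀ t, 0 ≤ δ t) (hη0 : ∀ t, 0 ≤ η t) (hw0 : ∀ t, 0 ≤ w t)
    (hc0 : 0 < c) (hc1 : c ≤ 1) (hA : 0 ≤ A)
    (hη1 : ∀ t, η t ≤ 1)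
    (hrec : ∀ t, δ (t + 1) ≤ (1 - c * η t) * δ t + A * η t * w t)
    (hdiv : ¬ Summable η)
    (hsum : Summable fun t => η t * w t) :
    Tendsto δ atTop (nhds 0) := by
  have hf0 : ∀ t, 0 ≤ A * η t * w t := fun t =>
    mul_nonneg (mul_nonneg hA (hη0 t)) (hw0 t)
  have hfs : Summable (fun t => A * η t * w t) := by
    simpa [mul_assoc] using hsum.mul_left A
  set S := fun n => ∑ i ∈ Finset.range n, A * η i * w i with hSdef
  have hSmono : Monotone S := fun a b hab =>
    Finset.sum_le_sum_of_subset_of_nonneg (Finset.range_subset_range.2 hab)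
      (fun i _ _ => hf0 i)
  have hScauchy : CauchySeq S := (hfs.hasSum.tendsto_sum_nat).cauchySeq
  set T := fun n => ∑ i ∈ Finset.range n, η i with hTdef
  have hTtop : Tendsto T atTop atTop :=
    (not_summable_iff_tendsto_nat_atTop_of_nonneg hη0).1 hdiv
  have hstep : ∀ t, δ (t + 1) ≤ δ t + A * η t * w t := by
    intro t
    have h := hrec t
    nlinarith [mul_nonneg (mul_nonneg hc0.le (hη0 t)) (hδ0 t)]
  rw [Metric.tendsto_atTop]
  intro ε hε
  have hε4 : 0 < ε / 4 := by linarith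
  obtain ⟨N, hN⟩ := Metric.cauchySeq_iff'.1 hScauchy (ε / 4) hε4
  have hSdiff : ∀ t, N ≤ t → S t - S N < ε / 4 := by
    intro t ht
    have h1 := hN t ht
    rw [Real.dist_eq] at h1
    have h2 := abs_lt.1 h1
    linarith [h2.2]
  have hclaim1 : ∃ M, N ≤ M ∧ δ M ≤ ε / 4 := by
    by_contra hcon
    push_neg at hcon
    have hbound : ∀ t, N ≤ t →
        δ t ≤ δ N + (S t - S N) - c * (ε / 4) * (T t - T N) := by
      intro t ht
      induction t, ht using Nat.le_induction with
      | base => simp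
      | succ t ht ih =>
        have h1 := hrec t
        have h2 := hcon t ht
        have h3 : 0 ≤ c * η t * (δ t - ε / 4) :=
          mul_nonneg (mul_nonneg hc0.le (hη0 t)) (by linarith)
        have hS' : S (t + 1) = S t + A * η t * w t := Finset.sum_range_succ _ _
        have hT' : T (t + 1) = T t + η t := Finset.sum_range_succ _ _
        rw [hS', hT']
        nlinarith
    obtain ⟨t, ht1, ht2⟩ :=
      ((hTtop.eventually_ge_atTop (T N + δ N / (c * (ε / 4)))).and
        (eventually_ge_atTop N)).exists
    have hcε : 0 < c * (ε / 4) := mul_pos hc0 hε4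
    have hkey : δ N ≤ c * (ε / 4) * (T t - T N) := by
      rw [← div_le_iff₀' hcε]
      linarith
    have := hbound t ht2
    have := hSdiff t ht2
    have := hcon t ht2
    linarith
  obtain ⟨M, hMN, hδM⟩ := hclaim1
  have hclaim2 : ∀ t, M ≤ t → δ t ≤ δ M + (S t - S M) := by
    intro t ht
    induction t, ht using Nat.le_induction with
    | base => simp
    | succ t ht ih =>
      have h1 := hstep t
      have hS' : S (t + 1) = S t + A * η t * w t := Finset.sum_range_succ _ _
      rw [hS']
      linarith
  refine ⟨M, fun n hn => ?_⟩
  have h1 := hclaim2 n hn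
  have h2 := hSdiff n (le_trans hMN hn)
  have h3 : S N ≤ S M := hSmono hMN
  rw [Real.dist_eq, sub_zero, abs_of_nonneg (hδ0 n)]
  linarith
end
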